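/- arXiv:2209.10725 — 4 statements merged into one kernel-verified Lean document; each statement's English description precedes it below -/
import Mathlib

section
/- Let j be a positive even integer and define A_n^0 and C_n^0 as for the para-Bannai-Ito polynomials with N = 2j: A_n^0 = -(n-j-a)/4 if n even, n ≠ j; A_n^0 = -(n+1)(n-j-b)/(4(n-j)) if n odd; A_j^0 = (1-α)a/2; C_n^0 = (n-j+a)/4 if n even, n ≠ j; C_n^0 = (n-2j-1)(n-j+b)/(4(n-j)) if n odd; C_j^0 = αa/2. If α = 1/2, then for all 0 ≤ n ≤ 2j one has A_n^0 = C_{2j-n}^0 and C_n^0 = A_{2j-n}^0. -/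
/-- Recurrence coefficient `A_n^0` of the para-Bannai-Ito polynomials, `N = 2j`, `j` even. -/
noncomputable def A0 (j : ℕ) (a b α : ℝ) (n : ℕ) : ℝ :=
  if n = j then (1 - α) * a / 2
  else if n % 2 = 0 then -((n : ℝ) - j - a) / 4
  else -(((n : ℝ) + 1) * ((n : ℝ) - j - b)) / (4 * ((n : ℝ) - j))

/-- Recurrence coefficient `C_n^0` of the para-Bannai-Ito polynomials, `N = 2j`, `j` even. -/
noncomputable def C0 (j : ℕ) (a b α : ℝ) (n : ℕ) : ℝ :=
  if n = j then α * a / 2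
  else if n % 2 = 0 then ((n : ℝ) - j + a) / 4
  else (((n : ℝ) - 2 * j - 1) * ((n : ℝ) - j + b)) / (4 * ((n : ℝ) - j))

/-! The reflection `n ↦ 2j - n` preserves parity and negates `n - j`, which exchanges the
formulas for `A_n^0` and `C_n^0` for every `α`; only the middle coefficients `(1 - α) a / 2` and
`α a / 2` require `α = 1/2`. -/

theorem A0_eq_C0_two_mul_sub {j n : ℕ} (a b α : ℝ) (hn : n ≤ 2 * j) (hnj : n ≠ j) :
    A0 j a b α n = C0 j a b α (2 * j - n) := by
  have hmj : 2 * j - n ≠ j := by omega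
  have hcast : ((2 * j - n : ℕ) : ℝ) = 2 * j - n := by push_cast [Nat.cast_sub hn]; ring
  simp only [A0, C0, if_neg hnj, if_neg hmj, hcast]
  rcases Nat.mod_two_eq_zero_or_one n with hn0 | hn1
  · rw [if_pos hn0, if_pos (by omega)]
    ring
  · rw [if_neg (by omega), if_neg (by omega)]
    have hsub : (n : ℝ) - j ≠ 0 := sub_ne_zero.mpr (by exact_mod_cast hnj)
    rw [show 2 * (j : ℝ) - n - j = -((n : ℝ) - j) by ring]
    field_simp
    ring

theorem A0_self_eq_C0_self (j : ℕ) (a b : ℝ) : A0 j a b (1/2) j = C0 j a b (1/2) j := by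
  simp only [A0, C0, if_pos]
  norm_num

theorem stmt1_general (j : ℕ) (a b : ℝ) :
    ∀ n ≤ 2 * j,
      A0 j a b (1/2) n = C0 j a b (1/2) (2 * j - n) ∧
      C0 j a b (1/2) n = A0 j a b (1/2) (2 * j - n) := by
  have reflect : ∀ m ≤ 2 * j, A0 j a b (1/2) m = C0 j a b (1/2) (2 * j - m) := by
    intro m hm
    rcases eq_or_ne m j with rfl | hmj
    · rw [two_mul, Nat.add_sub_cancel]
      exact A0_self_eq_C0_self m a b
    · exact A0_eq_C0_two_mul_sub a b _ hm hmj
  intro n hn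
  refine ⟨reflect n hn, ?_⟩
  simpa only [Nat.sub_sub_self hn] using (reflect (2 * j - n) (Nat.sub_le _ _)).symm

/-- Mirror symmetry of the para-Bannai-Ito recurrence coefficients at `α = 1/2`. -/
theorem stmt1 (j : ℕ) (hj : Even j) (hj0 : 0 < j) (a b : ℝ) :
    ∀ n ≤ 2 * j,
      A0 j a b (1/2) n = C0 j a b (1/2) (2 * j - n) ∧
      C0 j a b (1/2) n = A0 j a b (1/2) (2 * j - n) :=
  stmt1_general j a b
end

section
/- Let j be a positive even integer and set a = -j-1, b = 0, α = 1/2 in the para-Bannai-Ito recurrence coefficients for N = 2j (A_n^0 = -(n-j-a)/4 if n even ≠ j, A_n^0 = -(n+1)(n-j-b)/(4(n-j)) if n odd, A_j^0 = (1-α)a/2; C_n^0 = (n-j+a)/4 if n even ≠ j, C_n^0 = (n-2j-1)(n-j+b)/(4(n-j)) if n odd, C_j^0 = αa/2). Then for every n with 1 ≤ n ≤ 2j, the diagonal recurrence coefficient (b-j-1+a)/4 - A_n^0 - C_n^0 equals 0 and the off-diagonal product A_{n-1}^0 C_n^0 equals n(2j+1-n)/16. -/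
/-! At `a = -j-1`, `b = 0`, `α = 1/2` the three branches of each coefficient collapse to one
linear formula: `A_n^0 = -(n+1)/4` and `C_n^0 = (n-2j-1)/4` for every `n` (the factor `n - j`
cancels in the odd branch, and the even and middle branches agree with it). The diagonal term
then vanishes and `A_{n-1}^0 C_n^0 = -n(n-2j-1)/16`. -/

lemma A0_krawtchouk (j n : ℕ) : A0 j (-(j : ℝ) - 1) 0 (1/2) n = -((n : ℝ) + 1) / 4 := by
  unfold A0
  split_ifs with hnj
  · subst hnj; ring
  · ring
  · have : (n : ℝ) - j ≠ 0 := sub_ne_zero.mpr (by exact_mod_cast hnj)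
    field_simp
    ring

lemma C0_krawtchouk (j n : ℕ) : C0 j (-(j : ℝ) - 1) 0 (1/2) n = ((n : ℝ) - 2 * j - 1) / 4 := by
  unfold C0
  split_ifs with hnj
  · subst hnj; ring
  · ring
  · have : (n : ℝ) - j ≠ 0 := sub_ne_zero.mpr (by exact_mod_cast hnj)
    field_simp
    ring

theorem stmt3_general (j : ℕ) :
    ∀ n : ℕ, 1 ≤ n → n ≤ 2 * j →
      ((0 : ℝ) - j - 1 + (-(j : ℝ) - 1)) / 4
          - A0 j (-(j : ℝ) - 1) 0 (1/2) n - C0 j (-(j : ℝ) - 1) 0 (1/2) n = 0 ∧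
      A0 j (-(j : ℝ) - 1) 0 (1/2) (n - 1) * C0 j (-(j : ℝ) - 1) 0 (1/2) n
          = (n : ℝ) * (2 * (j : ℝ) + 1 - n) / 16 := by
  intro n hn _
  simp only [A0_krawtchouk, C0_krawtchouk, Nat.cast_sub hn, Nat.cast_one]
  constructor <;> ring

/-- At `a = -j-1`, `b = 0`, `α = 1/2` the para-Bannai-Ito recurrence reduces to the
monic symmetric Krawtchouk recurrence. -/
theorem stmt3 (j : ℕ) (hj : Even j) (hj0 : 0 < j) :
    ∀ n : ℕ, 1 ≤ n → n ≤ 2 * j →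
      ((0 : ℝ) - j - 1 + (-(j : ℝ) - 1)) / 4
          - A0 j (-(j : ℝ) - 1) 0 (1/2) n - C0 j (-(j : ℝ) - 1) 0 (1/2) n = 0 ∧
      A0 j (-(j : ℝ) - 1) 0 (1/2) (n - 1) * C0 j (-(j : ℝ) - 1) 0 (1/2) n
          = (n : ℝ) * (2 * (j : ℝ) + 1 - n) / 16 :=
  stmt3_general j
end

section
/- Let j be a positive even integer, a, b real, and n an even integer with 0 ≤ n ≤ 2j+1 and n ≠ j. For ε > 0, set q = -e^ε, c = i·exp(ε(a+b-j)/2), d = i·exp(ε(-a+b-j)/2), and A_n^R(ε) = (1 - c d q^n)(d - c q^{n-j})(1 - q^{n-2j-1}) / (2 c d (1 - q^{2n-2j-1})(1 + q^{n-j})). Then the limit as ε → 0⁺ of A_n^R(ε)/(2iε) exists and equals (n - j + a)/4. -/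
/-!
Factor `A_n^R / (2iε)` as `R(ε) · (d - c q^{n-j}) / (2iε)`. The first factor is continuous at
`ε = 0`, where `q = -1`, `c = d = i`, and the parities of the exponents give `R(0) = -1/2`.
Since `n - j` is even, `q^{n-j} = e^{ε(n-j)}`, so the second factor is `1/2` times the difference
quotient at `0` of `e^{ε(-a+b-j)/2} - e^{ε((a+b-j)/2 + n - j)}`, whose limit is `-(n - j + a)`.
-/

open Filter Topology Complex

lemma neg_exp_zpow_of_even {m : ℤ} (hm : Even m) (z : ℂ) : (-cexp z) ^ m = cexp (m * z) := by
  rw [neg_eq_neg_one_mul, mul_zpow, hm.neg_one_zpow, one_mul, Complex.exp_int_mul]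

lemma tendsto_exp_sub_exp_div (u v : ℂ) :
    Tendsto (fun ε : ℝ => (cexp (ε * u) - cexp (ε * v)) / ε) (𝓝[≠] 0) (𝓝 (u - v)) := by
  have hexp (w : ℂ) : HasDerivAt (fun ε : ℝ => cexp (ε * w)) w 0 := by
    simpa using ((hasDerivAt_id (0 : ℝ)).ofReal_comp.mul_const w).cexp
  refine (hasDerivAt_iff_tendsto_slope.mp ((hexp u).sub (hexp v))).congr fun ε => ?_
  simp [slope_def_module, div_eq_inv_mul]

lemma tendsto_sub_mul_neg_exp_zpow_div {m : ℤ} (hm : Even m) (u v : ℂ) :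
    Tendsto (fun ε : ℝ => (I * cexp (ε * v) - I * cexp (ε * u) * (-cexp ε) ^ m) / (2 * I * ε))
      (𝓝[≠] 0) (𝓝 ((v - (u + m)) / 2)) := by
  refine ((tendsto_exp_sub_exp_div v (u + m)).div_const 2).congr fun ε => ?_
  rw [neg_exp_zpow_of_even hm, mul_assoc, ← Complex.exp_add]
  field_simp

lemma tendsto_regular_factor {X : Type*} [TopologicalSpace X] {x₀ : X} {q c d : X → ℂ}
    (hq : ContinuousAt q x₀) (hc : ContinuousAt c x₀) (hd : ContinuousAt d x₀)
    (hq₀ : q x₀ = -1) (hc₀ : c x₀ = I) (hd₀ : d x₀ = I) {k l m p : ℤ}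
    (hk : Even k) (hl : Even l) (hm : Odd m) (hp : Odd p) :
    Tendsto (fun x => (1 - c x * d x * q x ^ k) * (1 - q x ^ m) /
      (2 * c x * d x * (1 - q x ^ p) * (1 + q x ^ l))) (𝓝 x₀) (𝓝 (-1 / 2)) := by
  have hq₀' : q x₀ ≠ 0 := by simp [hq₀]
  have hden : 2 * c x₀ * d x₀ * (1 - q x₀ ^ p) * (1 + q x₀ ^ l) = -8 := by
    simp only [hq₀, hc₀, hd₀, hl.neg_one_zpow, hp.neg_one_zpow]
    linear_combination 8 * I_mul_I
  convert (ContinuousAt.tendsto ?_) using 2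
  · rw [hden, hq₀, hc₀, hd₀, hk.neg_one_zpow, hm.neg_one_zpow]
    linear_combination (-1 / 4 : ℂ) * I_mul_I
  · exact ContinuousAt.div (by fun_prop (disch := exact .inl hq₀'))
      (by fun_prop (disch := exact .inl hq₀')) (by rw [hden]; norm_num)

theorem stmt9_general (j : ℕ) (hj : Even j) (a b : ℝ) (n : ℕ)
    (hn : Even n) :
    Tendsto (fun ε : ℝ =>
      (fun (q c d : ℂ) =>
        ((1 - c * d * q ^ (n : ℤ)) * (d - c * q ^ ((n : ℤ) - j)) *
            (1 - q ^ ((n : ℤ) - 2 * j - 1)) /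
          (2 * c * d * (1 - q ^ (2 * (n : ℤ) - 2 * j - 1)) * (1 + q ^ ((n : ℤ) - j)))) /
        (2 * Complex.I * (ε : ℂ)))
        (-Complex.exp (ε : ℂ))
        (Complex.I * Complex.exp ((ε : ℂ) * (a + b - j) / 2))
        (Complex.I * Complex.exp ((ε : ℂ) * (-a + b - j) / 2)))
      (nhdsWithin 0 (Set.Ioi 0)) (nhds ((((n : ℝ) - j + a) / 4 : ℝ) : ℂ)) := by
  have hn' : Even (n : ℤ) := by exact_mod_cast hn
  have hj' : Even (j : ℤ) := by exact_mod_cast hj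
  have hofReal : Continuous ((↑) : ℝ → ℂ) := continuous_ofReal
  have hregular := tendsto_regular_factor (x₀ := (0 : ℝ)) (q := fun ε => -cexp ε)
    (c := fun ε => I * cexp (ε * ((a + b - j) / 2)))
    (d := fun ε => I * cexp (ε * ((-a + b - j) / 2)))
    (by fun_prop) (by fun_prop) (by fun_prop) (by simp) (by simp) (by simp) hn' (hn'.sub hj')
    ((hn'.sub (hj'.mul_left 2)).sub_odd odd_one)
    (((hn'.mul_left 2).sub (hj'.mul_left 2)).sub_odd odd_one)
  have hslope := tendsto_sub_mul_neg_exp_zpow_div (hn'.sub hj') ((a + b - j) / 2) ((-a + b - j) / 2)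
  convert (hregular.mono_left nhdsWithin_le_nhds).mul (hslope.mono_left (nhdsGT_le_nhdsNE 0))
    using 2 with ε
  · simp only [mul_div_assoc]
    ring
  · push_cast
    ring

/-- Under `q = -e^ε`, `c = i e^{ε(a+b-j)/2}`, `d = i e^{ε(-a+b-j)/2}`, the `q → -1`
(`ε → 0⁺`) limit of the q-para-Racah recurrence coefficient `A_n^R/(2iε)` for even
`n ≠ j` is the para-Bannai-Ito coefficient `(n - j + a)/4`. -/
theorem stmt9 (j : ℕ) (hj : Even j) (hj0 : 0 < j) (a b : ℝ) (n : ℕ)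
    (hn : Even n) (hn2 : n ≤ 2 * j + 1) (hnj : n ≠ j) :
    Tendsto (fun ε : ℝ =>
      (fun (q c d : ℂ) =>
        ((1 - c * d * q ^ (n : ℤ)) * (d - c * q ^ ((n : ℤ) - j)) *
            (1 - q ^ ((n : ℤ) - 2 * j - 1)) /
          (2 * c * d * (1 - q ^ (2 * (n : ℤ) - 2 * j - 1)) * (1 + q ^ ((n : ℤ) - j)))) /
        (2 * Complex.I * (ε : ℂ)))
        (-Complex.exp (ε : ℂ))
        (Complex.I * Complex.exp ((ε : ℂ) * (a + b - j) / 2))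
        (Complex.I * Complex.exp ((ε : ℂ) * (-a + b - j) / 2)))
      (nhdsWithin 0 (Set.Ioi 0)) (nhds ((((n : ℝ) - j + a) / 4 : ℝ) : ℂ)) :=
  stmt9_general j hj a b n hn
end

section
/- Let j be a positive even integer and define u_n = A_{n-1}^0 C_n^0 with α = 1/2, where A_n^0 = -(n-j-a)/4 for n even ≠ j, A_n^0 = -(n+1)(n-j-b)/(4(n-j)) for n odd, A_j^0 = a/4, C_n^0 = (n-j+a)/4 for n even ≠ j, C_n^0 = (n-2j-1)(n-j+b)/(4(n-j)) for n odd, C_j^0 = a/4. Then the product u_1 · u_2 · ... · u_{2j} equals [ (1)_j · ((b+1-j)/2)_j · (-(j+a)/2)_j / (2^{2j} · ((1-j)/2)_j) ]², where (x)_k denotes the rising Pochhammer symbol x(x+1)···(x+k-1). -/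
/-!
Pair the factors as `u_{2k+1} u_{2k+2}`. At `α = 1/2` the exceptional values
`A_j^0 = C_j^0 = a/4` agree with the generic even-index formulas, so each pair is a ratio of
linear factors `2k + c`, and the product of such a factor over `k < j` is `2^j (c/2)_j`.
For even `j` one has `(x)_j = (y)_j` whenever `x + y = 1 - j`; this matches the factor from
`A_{2k}^0` with the one from `C_{2k+2}^0`, the two factors carrying `b`, and `2k - 2j` with
`2k + 2`, so the product is a perfect square.
-/

open Finset

lemma ascPochhammer_eval_eq_prod_range {R : Type*} [CommSemiring R] (n : ℕ) (x : R) :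
    (ascPochhammer R n).eval x = ∏ k ∈ range n, (x + k) := by
  induction n with
  | zero => simp
  | succ n ih => rw [ascPochhammer_succ_eval, ih, prod_range_succ]

lemma prod_range_two_mul_add {K : Type*} [Field K] [NeZero (2 : K)] (n : ℕ) (c : K) :
    ∏ k ∈ range n, (2 * k + c) = 2 ^ n * (ascPochhammer K n).eval (c / 2) := by
  calc ∏ k ∈ range n, (2 * k + c) = ∏ k ∈ range n, (2 * (c / 2 + k)) :=
        prod_congr rfl fun k _ => by field_simp; ring
    _ = 2 ^ n * (ascPochhammer K n).eval (c / 2) := by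
        rw [prod_mul_distrib, prod_const, card_range, ascPochhammer_eval_eq_prod_range]

lemma ascPochhammer_eval_eq_of_add_eq {R : Type*} [CommRing R] {n : ℕ} (hn : Even n) {x y : R}
    (hxy : x + y = 1 - n) : (ascPochhammer R n).eval x = (ascPochhammer R n).eval y := by
  rw [show y = -x - n + 1 by linear_combination hxy, ← descPochhammer_eval_eq_ascPochhammer,
    ← one_mul (Polynomial.eval (-x) _), ← hn.neg_one_pow,
    ← ascPochhammer_eval_neg_eq_descPochhammer, neg_neg]

lemma prod_Icc_one_eq_prod_range {M : Type*} [CommMonoid M] (f : ℕ → M) (n : ℕ) :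
    ∏ i ∈ Icc 1 n, f i = ∏ i ∈ range n, f (i + 1) := by
  induction n with
  | zero => simp
  | succ n ih => rw [prod_Icc_succ_top (by omega), ih, prod_range_succ]

lemma prod_range_two_mul {M : Type*} [CommMonoid M] (f : ℕ → M) (n : ℕ) :
    ∏ i ∈ range (2 * n), f i = ∏ k ∈ range n, (f (2 * k) * f (2 * k + 1)) := by
  induction n with
  | zero => simp
  | succ n ih => rw [mul_add_one, prod_range_succ, prod_range_succ, ih, prod_range_succ, mul_assoc]

section Coefficients

variable {j : ℕ} {a b : ℝ} {n : ℕ}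

lemma A0_half_of_even (hn : Even n) : A0 j a b (1/2) n = (j + a - n) / 4 := by
  unfold A0
  split_ifs with hnj hn2
  · subst hnj; ring
  · ring
  · exact absurd (Nat.even_iff.mp hn) hn2

lemma C0_half_of_even (hn : Even n) : C0 j a b (1/2) n = (n - j + a) / 4 := by
  unfold C0
  split_ifs with hnj hn2
  · subst hnj; ring
  · ring
  · exact absurd (Nat.even_iff.mp hn) hn2

lemma A0_of_odd (hj : Even j) (hn : Odd n) (α : ℝ) :
    A0 j a b α n = -((n + 1) * (n - j - b)) / (4 * (n - j)) := by
  have hnj : n ≠ j := by rintro rfl; exact Nat.not_even_iff_odd.mpr hn hj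
  simp [A0, hnj, Nat.odd_iff.mp hn]

lemma C0_of_odd (hj : Even j) (hn : Odd n) (α : ℝ) :
    C0 j a b α n = (n - 2 * j - 1) * (n - j + b) / (4 * (n - j)) := by
  have hnj : n ≠ j := by rintro rfl; exact Nat.not_even_iff_odd.mpr hn hj
  simp [C0, hnj, Nat.odd_iff.mp hn]

lemma A0_mul_C0_pair_half (hj : Even j) (k : ℕ) :
    A0 j a b (1/2) (2 * k) * C0 j a b (1/2) (2 * k + 1) *
        (A0 j a b (1/2) (2 * k + 1) * C0 j a b (1/2) (2 * k + 2)) =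
      (2 * k + -(j + a)) * (2 * k + (2 - j + a)) * (2 * k + -(2 * j)) * (2 * k + 2) *
        (2 * k + (b + 1 - j)) * (2 * k + (1 - j - b)) / (2 ^ 8 * (2 * k + (1 - j)) ^ 2) := by
  have hodd : (2 * k + 1 : ℝ) ≠ j := by
    exact_mod_cast fun h : 2 * k + 1 = j =>
      Nat.not_even_iff_odd.mpr (odd_two_mul_add_one k) (h ▸ hj)
  have hk : (2 * k + 1 - j : ℝ) ≠ 0 := sub_ne_zero.mpr hodd
  have hk' : (2 * k + (1 - j) : ℝ) ≠ 0 := by rwa [← add_sub_assoc]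
  rw [A0_half_of_even (even_two_mul k), C0_half_of_even (n := 2 * k + 2) ⟨k + 1, by ring⟩,
    A0_of_odd hj (odd_two_mul_add_one k), C0_of_odd hj (odd_two_mul_add_one k)]
  push_cast
  field_simp
  ring

end Coefficients

theorem stmt10_general (j : ℕ) (hj : Even j) (a b : ℝ) :
    (∏ n ∈ Finset.Icc 1 (2 * j), A0 j a b (1/2) (n - 1) * C0 j a b (1/2) n) =
      (((ascPochhammer ℝ j).eval (1 : ℝ) *
          (ascPochhammer ℝ j).eval ((b + 1 - (j : ℝ)) / 2) *
          (ascPochhammer ℝ j).eval (-((j : ℝ) + a) / 2)) /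
        (2 ^ (2 * j) * (ascPochhammer ℝ j).eval ((1 - (j : ℝ)) / 2))) ^ 2 := by
  rw [prod_Icc_one_eq_prod_range, prod_range_two_mul]
  -- `2 * k + 1 - 1 = 2 * k` and `2 * k + 1 + 1 - 1 = 2 * k + 1` hold by `rfl`, not syntactically
  refine (prod_congr rfl fun k _ => A0_mul_C0_pair_half hj k).trans ?_
  rw [prod_div_distrib]
  simp only [prod_mul_distrib, prod_pow, prod_const, card_range, prod_range_two_mul_add]
  rw [ascPochhammer_eval_eq_of_add_eq hj (x := (2 - j + a) / 2) (y := -((j : ℝ) + a) / 2)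
      (by ring),
    ascPochhammer_eval_eq_of_add_eq hj (x := -(2 * (j : ℝ)) / 2) (y := 1) (by ring),
    ascPochhammer_eval_eq_of_add_eq hj (x := (1 - j - b) / 2) (y := (b + 1 - j) / 2) (by ring),
    div_self two_ne_zero, pow_mul']
  field_simp

/-- At `α = 1/2`, the product `u_1 ⋯ u_{2j}` of the off-diagonal entries of the
para-Bannai-Ito Jacobi matrix equals `h_{2j}²` expressed via Pochhammer symbols. -/
theorem stmt10 (j : ℕ) (hj : Even j) (hj0 : 0 < j) (a b : ℝ) :
    (∏ n ∈ Finset.Icc 1 (2 * j), A0 j a b (1/2) (n - 1) * C0 j a b (1/2) n) =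
      (((ascPochhammer ℝ j).eval (1 : ℝ) *
          (ascPochhammer ℝ j).eval ((b + 1 - (j : ℝ)) / 2) *
          (ascPochhammer ℝ j).eval (-((j : ℝ) + a) / 2)) /
        (2 ^ (2 * j) * (ascPochhammer ℝ j).eval ((1 - (j : ℝ)) / 2))) ^ 2 :=
  stmt10_general j hj a b
end
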